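/- Let H be a connected interval d-uniform hypergraph on vertex set [n] with no isolated vertices (d ≥ 2). Then any set of d consecutive vertices {j, j+1, …, j+d−1} ⊆ [n] is a hypergraph zero forcing set for H. -/

import Mathlib

/-! Common definitions: hypermatrices, hypergraphs, zero forcing, infection,
power domination zero forcing. -/

/-- A `d`-hypermatrix of dimension `n` over `F` is symmetric if its entries are
invariant under permutations of the indices. -/
def HMSymmetric {F : Type*} {n d : ℕ} (A : (Fin d → Fin n) → F) : Prop :=
  ∀ (i : Fin d → Fin n) (π : Equiv.Perm (Fin d)), A (i ∘ π) = A i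

/-- The space of null vectors of a `d`-hypermatrix: `x` is a null vector if
`∑ j, a_{i₁ ⋯ i_{d-1} j} x_j = 0` for every choice of indices `i₁, …, i_{d-1}`
(the last index is summed against `x`). -/
def nullSpace {F : Type*} [Field F] {n d : ℕ} (A : (Fin d → Fin n) → F) :
    Submodule F (Fin n → F) where
  carrier := {x | ∀ i : Fin d → Fin n,
    ∑ j : Fin n, A (fun k => if (k : ℕ) = d - 1 then j else i k) * x j = 0}
  add_mem' := by
    intro a b ha hb i
    simp only [Set.mem_setOf_eq] at ha hb
    simp only [Set.mem_setOf_eq, Pi.add_apply, mul_add, Finset.sum_add_distrib, ha i, hb i,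
      add_zero]
  zero_mem' := by
    intro i
    simp
  smul_mem' := by
    intro c x hx i
    simp only [Set.mem_setOf_eq] at hx
    simp only [Set.mem_setOf_eq, Pi.smul_apply, smul_eq_mul]
    have h : ∑ j : Fin n, A (fun k => if (k : ℕ) = d - 1 then j else i k) * (c * x j)
        = c * ∑ j : Fin n, A (fun k => if (k : ℕ) = d - 1 then j else i k) * x j := by
      rw [Finset.mul_sum]
      exact Finset.sum_congr rfl (fun j _ => by ring)
    rw [h, hx i, mul_zero]

/-- The nullity of a hypermatrix is the dimension of its space of null vectors. -/
noncomputable def hmNullity (F : Type*) [Field F] {n d : ℕ}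
    (A : (Fin d → Fin n) → F) : ℕ :=
  Module.finrank F (nullSpace A)

/-- A hypergraph on vertex type `V`: a set of hyperedges, each a finite set of
vertices. -/
structure Hypergraph' (V : Type*) where
  edges : Set (Finset V)

/-- A hypergraph is `d`-uniform if every edge has exactly `d` vertices. -/
def Hypergraph'.IsUniform {V : Type*} (H : Hypergraph' V) (d : ℕ) : Prop :=
  ∀ e ∈ H.edges, e.card = d

/-- A hypercubical `d`-hypermatrix is graphical if it is symmetric and the entries
indexed by non-distinct indices vanish. -/
def Graphical {F : Type*} [Field F] {n d : ℕ} (A : (Fin d → Fin n) → F) : Prop :=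
  HMSymmetric A ∧ ∀ i : Fin d → Fin n, ¬ Function.Injective i → A i = 0

/-- The hypergraph of a graphical `d`-hypermatrix: edges are the (distinct) index
sets of nonzero entries. -/
def hypergraphOf {F : Type*} [Field F] {n d : ℕ} (A : (Fin d → Fin n) → F) :
    Hypergraph' (Fin n) :=
  ⟨{e | ∃ i : Fin d → Fin n, Function.Injective i ∧ Finset.image i Finset.univ = e ∧ A i ≠ 0}⟩

/-- `A ∈ S(H)`: `A` is graphical and its hypergraph is `H`. -/
def InSFam {F : Type*} [Field F] {n d : ℕ} (H : Hypergraph' (Fin n))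
    (A : (Fin d → Fin n) → F) : Prop :=
  Graphical A ∧ hypergraphOf A = H

/-- The maximum nullity `M(H)` of a `d`-uniform hypergraph `H` over the field `F`. -/
noncomputable def maxNullity (F : Type*) [Field F] {n : ℕ} (d : ℕ)
    (H : Hypergraph' (Fin n)) : ℕ :=
  sSup {k | ∃ A : (Fin d → Fin n) → F, InSFam H A ∧ hmNullity F A = k}

/-- One application of the hypergraph color change rule: a set `S` of `d-1`
distinct vertices forces the white vertex `w` (i.e. `S ∪ {w}` is an edge and
`S ∪ {u}` being an edge for a white `u` implies `u = w`), turning the blue set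
`B` into `B'`. -/
def ZFStep {V : Type*} [DecidableEq V] (H : Hypergraph' V) (d : ℕ) (B B' : Set V) : Prop :=
  ∃ (S : Finset V) (w : V), S.card = d - 1 ∧ w ∉ S ∧ w ∉ B ∧
    insert w S ∈ H.edges ∧
    (∀ u : V, u ∉ B → insert u S ∈ H.edges → u = w) ∧
    B' = insert w B

/-- `B` is a hypergraph zero forcing set: starting from blue set `B`, repeated
applications of the hypergraph color change rule color every vertex blue. -/
def IsZFSet {V : Type*} [DecidableEq V] (H : Hypergraph' V) (d : ℕ) (B : Set V) : Prop :=
  Relation.ReflTransGen (ZFStep H d) B Set.univ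

/-- The hypergraph zero forcing number `Z₀(H)`: the minimum cardinality of a
hypergraph zero forcing set. -/
noncomputable def Z0 {V : Type*} [DecidableEq V] (H : Hypergraph' V) (d : ℕ) : ℕ :=
  sInf {k | ∃ B : Finset V, B.card = k ∧ IsZFSet H d (↑B : Set V)}

/-- One application of the infection rule: a nonempty set `S` of infected vertices
contained in an edge `e`, such that for every uninfected `u ∉ e` the set `S ∪ {u}`
is contained in no edge, infects all of `e`. -/
def InfStep {V : Type*} [DecidableEq V] (H : Hypergraph' V) (B B' : Set V) : Prop :=
  ∃ (S e : Finset V), e ∈ H.edges ∧ S.Nonempty ∧ (↑S : Set V) ⊆ B ∧ S ⊆ e ∧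
    (∀ u : V, u ∉ B → u ∉ e → ∀ e' ∈ H.edges, ¬ insert u S ⊆ e') ∧
    B' = B ∪ (↑e : Set V)

/-- `B` is an infection set: starting from `B` infected, repeated applications of
the infection rule infect every vertex. -/
def IsInfectionSet {V : Type*} [DecidableEq V] (H : Hypergraph' V) (B : Set V) : Prop :=
  Relation.ReflTransGen (InfStep H) B Set.univ

/-- The infection number `I(H)`. -/
noncomputable def infNum {V : Type*} [DecidableEq V] (H : Hypergraph' V) : ℕ :=
  sInf {k | ∃ B : Finset V, B.card = k ∧ IsInfectionSet H (↑B : Set V)}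

/-- `w` is a neighbor of `v` if some edge contains both (and `v ≠ w`). -/
def Hypergraph'.Neighbor {V : Type*} (H : Hypergraph' V) (v w : V) : Prop :=
  v ≠ w ∧ ∃ e ∈ H.edges, v ∈ e ∧ w ∈ e

/-- One application of the power domination color change rule: if all white
neighbors of a blue vertex `v` lie in a single edge containing `v`, they all
become blue. -/
def PDStep {V : Type*} (H : Hypergraph' V) (B B' : Set V) : Prop :=
  ∃ v ∈ B, ∃ e ∈ H.edges, v ∈ e ∧
    (∀ w : V, H.Neighbor v w → w ∉ B → w ∈ e) ∧
    B' = B ∪ {w | H.Neighbor v w ∧ w ∉ B}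

/-- `B` is a power domination zero forcing set. -/
def IsPDZFSet {V : Type*} (H : Hypergraph' V) (B : Set V) : Prop :=
  Relation.ReflTransGen (PDStep H) B Set.univ

/-- The power domination zero forcing number `Zpd(H)`. -/
noncomputable def Zpd {V : Type*} (H : Hypergraph' V) : ℕ :=
  sInf {k | ∃ B : Finset V, B.card = k ∧ IsPDZFSet H (↑B : Set V)}

/-- The complete `d`-uniform hypergraph on `Fin n`: all `d`-element subsets. -/
def completeHG (n d : ℕ) : Hypergraph' (Fin n) :=
  ⟨{e : Finset (Fin n) | e.card = d}⟩

/-- Two vertices are linked if some edge contains both. -/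
def Hypergraph'.Linked {V : Type*} (H : Hypergraph' V) (a b : V) : Prop :=
  ∃ e ∈ H.edges, a ∈ e ∧ b ∈ e

/-- A hypergraph is connected if any two vertices are joined by a path. -/
def Hypergraph'.Connected {V : Type*} (H : Hypergraph' V) : Prop :=
  ∀ u v : V, Relation.ReflTransGen H.Linked u v

/-- The connected component of a vertex `v`. -/
def componentSet {V : Type*} (H : Hypergraph' V) (v : V) : Set V :=
  {u | Relation.ReflTransGen H.Linked v u}

/-- A vertex is isolated if it belongs to no edge. -/
def Hypergraph'.IsIsolated {V : Type*} (H : Hypergraph' V) (v : V) : Prop :=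
  ∀ e ∈ H.edges, v ∉ e

/-- An interval `d`-uniform hypergraph on `Fin n` (vertices numbered `0,…,n-1`):
every edge consists of `d` consecutive vertices `{ℓ, ℓ+1, …, ℓ+d-1}`. -/
def IsIntervalHG {n : ℕ} (H : Hypergraph' (Fin n)) (d : ℕ) : Prop :=
  ∀ e ∈ H.edges, ∃ ℓ : ℕ, e.image Fin.val = Finset.Ico ℓ (ℓ + d)

/-- The edge set of the special interval hypergraph `SI(d,s)` on vertices
`0,…,sd` (0-indexed): left endpoints `(i-1)d` and `(i-1)d+1` for `i = 1,…,s`. -/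
def siEdges (n d s : ℕ) : Set (Finset (Fin n)) :=
  {e | ∃ i < s, e.image Fin.val = Finset.Ico (i * d) (i * d + d) ∨
       e.image Fin.val = Finset.Ico (i * d + 1) (i * d + 1 + d)}

/-- The component of `H` induced on `U` is (a copy of) the special interval
hypergraph `SI(d,s)` for some `s ≥ 1`: the vertices of `U` are `sd+1` consecutive
integers starting at `a`, and the edges of `H` contained in `U` are exactly the
shifted special-interval edges. -/
def IsSIComponent {n : ℕ} (H : Hypergraph' (Fin n)) (d : ℕ) (U : Set (Fin n)) : Prop :=
  ∃ a s : ℕ, 1 ≤ s ∧ Fin.val '' U = Set.Ico a (a + s * d + 1) ∧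
    ∀ e : Finset (Fin n),
      (e ∈ H.edges ∧ (↑e : Set (Fin n)) ⊆ U) ↔
      ∃ i < s, e.image Fin.val = Finset.Ico (a + i * d) (a + i * d + d) ∨
               e.image Fin.val = Finset.Ico (a + i * d + 1) (a + i * d + 1 + d)

/-- The set of values `{ℓ, ℓ+1, …, ℓ+d-1}` taken modulo `n` (a circular arc). -/
def arcEdge (n d ℓ : ℕ) : Finset ℕ :=
  (Finset.range d).image (fun k => (ℓ + k) % n)

/-- The edge set of the special circular-arc hypergraph `SCA(d,s)` on `n = sd`
vertices (0-indexed): first endpoints `(i-1)d` and `(i-1)d+1` for `i = 1,…,s`. -/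
def scaEdges (n d s : ℕ) : Set (Finset (Fin n)) :=
  {e | ∃ i < s, e.image Fin.val = arcEdge n d (i * d) ∨
       e.image Fin.val = arcEdge n d (i * d + 1)}

/-- The `t`-tight circular-arc `d`-hypergraph on `d+1` vertices: edges are the
arcs of length `d` with first endpoints `(i-1)(d-t)` (0-indexed) for
`i = 1, …, (d+1)/(d-t)`. -/
def tightCA (d t : ℕ) : Hypergraph' (Fin (d + 1)) :=
  ⟨{e | ∃ i < (d + 1) / (d - t), e.image Fin.val = arcEdge (d + 1) d (i * (d - t))}⟩

/-- Edge deletion `H - e`. -/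
def deleteEdge {V : Type*} (H : Hypergraph' V) (e : Finset V) : Hypergraph' V :=
  ⟨H.edges \ {e}⟩

/-- Vertex deletion `H - v`: the vertex set becomes `{u // u ≠ v}` and the edges
are the edges of `H` not containing `v`. -/
def deleteVertex {V : Type*} [DecidableEq V] (H : Hypergraph' V) (v : V) : Hypergraph' {u : V // u ≠ v} :=
  ⟨{e | e.image Subtype.val ∈ H.edges}⟩

/-- The Cartesian product of hypergraphs. -/
def cartProd {V V' : Type*} [DecidableEq V] [DecidableEq V']
    (H : Hypergraph' V) (H' : Hypergraph' V') : Hypergraph' (V × V') :=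
  ⟨{E | (∃ e ∈ H.edges, ∃ v' : V', E = e ×ˢ ({v'} : Finset V')) ∨
        (∃ v : V, ∃ e' ∈ H'.edges, E = ({v} : Finset V) ×ˢ e')}⟩

private lemma crossing9 {V : Type*} {R : V → V → Prop} (P : V → Prop) {u v : V}
    (h : Relation.ReflTransGen R u v) (hu : P u) (hv : ¬ P v) :
    ∃ x y, R x y ∧ P x ∧ ¬ P y := by
  revert hv
  induction h with
  | refl => exact fun hv => absurd hu hv
  | @tail b c hab hbc ih =>
    intro hv
    by_cases hb : P b
    · exact ⟨b, c, hbc, hb, hv⟩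
    · exact ih hb

private lemma edge_card9 {n d : ℕ} {e : Finset (Fin n)} {ℓ : ℕ}
    (him : e.image Fin.val = Finset.Ico ℓ (ℓ + d)) : e.card = d := by
  have h := congrArg Finset.card him
  rwa [Finset.card_image_of_injective _ Fin.val_injective, Nat.card_Ico,
    Nat.add_sub_cancel_left] at h

private lemma mem_of_val9 {n d : ℕ} {e : Finset (Fin n)} {ℓ : ℕ}
    (him : e.image Fin.val = Finset.Ico ℓ (ℓ + d)) {b : ℕ} (hb : b < n)
    (h1 : ℓ ≤ b) (h2 : b < ℓ + d) : (⟨b, hb⟩ : Fin n) ∈ e := by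
  have hmem : b ∈ e.image Fin.val := by
    rw [him, Finset.mem_Ico]; exact ⟨h1, h2⟩
  obtain ⟨z, hz, hzv⟩ := Finset.mem_image.mp hmem
  have hze : z = ⟨b, hb⟩ := Fin.ext hzv
  rwa [hze] at hz

private lemma val_mem9 {n d : ℕ} {e : Finset (Fin n)} {ℓ : ℕ}
    (him : e.image Fin.val = Finset.Ico ℓ (ℓ + d)) {v : Fin n} (hv : v ∈ e) :
    ℓ ≤ (v : ℕ) ∧ (v : ℕ) < ℓ + d := by
  have hmem : (v : ℕ) ∈ e.image Fin.val := Finset.mem_image_of_mem _ hv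
  rw [him, Finset.mem_Ico] at hmem
  exact hmem

private lemma neighbors9 {n d : ℕ} (hd : 2 ≤ d) {H : Hypergraph' (Fin n)}
    (hint : IsIntervalHG H d) {e : Finset (Fin n)} {ℓ : ℕ}
    (him : e.image Fin.val = Finset.Ico ℓ (ℓ + d))
    {w u : Fin n} (hw : w ∈ e)
    (hu : insert u (e.erase w) ∈ H.edges) :
    u = w ∨ ((w : ℕ) = ℓ ∧ (u : ℕ) = ℓ + d) ∨ ((w : ℕ) + 1 = ℓ + d ∧ (u : ℕ) + 1 = ℓ) := by
  obtain ⟨m, hm⟩ := hint _ hu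
  have hecard : e.card = d := edge_card9 him
  have hwv := val_mem9 him hw
  have hunotin : u ∉ e.erase w := by
    intro hmem
    rw [Finset.insert_eq_self.mpr hmem] at hm
    have h1 := congrArg Finset.card hm
    rw [Finset.card_image_of_injective _ Fin.val_injective, Finset.card_erase_of_mem hw,
      hecard, Nat.card_Ico, Nat.add_sub_cancel_left] at h1
    omega
  have hset : Finset.Ico m (m + d) = insert (u : ℕ) ((Finset.Ico ℓ (ℓ + d)).erase (w : ℕ)) := by
    rw [← hm, Finset.image_insert, Finset.image_erase Fin.val_injective, him]
  have key : ∀ x : ℕ, (m ≤ x ∧ x < m + d) ↔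
      (x = (u : ℕ) ∨ (x ≠ (w : ℕ) ∧ (ℓ ≤ x ∧ x < ℓ + d))) := by
    intro x
    have h := Finset.ext_iff.mp hset x
    simpa [Finset.mem_Ico, Finset.mem_insert, Finset.mem_erase, and_assoc] using h
  have huval : ¬ ((u : ℕ) ≠ (w : ℕ) ∧ (ℓ ≤ (u : ℕ) ∧ (u : ℕ) < ℓ + d)) := by
    intro hcon
    apply hunotin
    have hmem : (u : ℕ) ∈ (Finset.Ico ℓ (ℓ + d)).erase (w : ℕ) := by
      simp only [Finset.mem_erase, Finset.mem_Ico]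
      exact ⟨hcon.1, hcon.2⟩
    rw [← him, ← Finset.image_erase Fin.val_injective] at hmem
    obtain ⟨z, hz, hzv⟩ := Finset.mem_image.mp hmem
    rwa [Fin.val_injective hzv] at hz
  have hval : (u : ℕ) = (w : ℕ) ∨ ((w : ℕ) = ℓ ∧ (u : ℕ) = ℓ + d) ∨
      ((w : ℕ) + 1 = ℓ + d ∧ (u : ℕ) + 1 = ℓ) := by
    have k1 := key ℓ
    have k2 := key (ℓ + 1)
    have k3 := key (ℓ + d - 1)
    have k4 := key (ℓ + d - 2)
    have k5 := key m
    have k6 := key (m + 1)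
    have k7 := key (m + d - 1)
    have k8 := key (u : ℕ)
    have k9 := key (w : ℕ)
    omega
  rcases hval with h | h | h
  · exact Or.inl (Fin.ext h)
  · exact Or.inr (Or.inl h)
  · exact Or.inr (Or.inr h)

private lemma reach9 {n d : ℕ} (hd : 2 ≤ d) {H : Hypergraph' (Fin n)}
    (hint : IsIntervalHG H d) (hconn : H.Connected) :
    ∀ k a b : ℕ, a + d ≤ b → b ≤ n → n ≤ b - a + k →
      Relation.ReflTransGen (ZFStep H d) {v : Fin n | a ≤ (v : ℕ) ∧ (v : ℕ) < b} Set.univ := by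
  intro k
  induction k with
  | zero =>
    intro a b h1 h2 h3
    have huniv : {v : Fin n | a ≤ (v : ℕ) ∧ (v : ℕ) < b} = Set.univ := by
      ext v
      have hv := v.isLt
      simp only [Set.mem_setOf_eq, Set.mem_univ, iff_true]
      omega
    rw [huniv]
  | succ k ih =>
    intro a b h1 h2 h3
    by_cases hbn : b < n
    · -- force rightward: color vertex b
      have hb1 : 1 ≤ b := by omega
      obtain ⟨x, y, hxy, hx, hy⟩ := crossing9 (fun v : Fin n => (v : ℕ) < b)
        (hconn ⟨b - 1, by omega⟩ ⟨b, hbn⟩) (by show b - 1 < b; omega) (by show ¬ b < b; omega)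
      have hx' : (x : ℕ) < b := hx
      have hy' : ¬ (y : ℕ) < b := hy
      obtain ⟨e, he, hxe, hye⟩ := hxy
      obtain ⟨ℓ, him⟩ := hint e he
      have hxv := val_mem9 him hxe
      have hyv := val_mem9 him hye
      have hℓb : ℓ < b := by omega
      have hbℓ : b < ℓ + d := by omega
      have hwe : (⟨b, hbn⟩ : Fin n) ∈ e := mem_of_val9 him hbn (by omega) hbℓ
      refine Relation.ReflTransGen.head
        ⟨e.erase ⟨b, hbn⟩, ⟨b, hbn⟩, ?_, Finset.notMem_erase _ _, ?_, ?_, ?_, ?_⟩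
        (ih a (b + 1) (by omega) (by omega) (by omega))
      · rw [Finset.card_erase_of_mem hwe, edge_card9 him]
      · simp only [Set.mem_setOf_eq]
        omega
      · rwa [Finset.insert_erase hwe]
      · intro u hu hins
        have hn := neighbors9 hd hint him hwe hins
        simp only [Set.mem_setOf_eq, not_and, not_lt] at hu
        have hwval : ((⟨b, hbn⟩ : Fin n) : ℕ) = b := rfl
        rcases hn with h | h | h
        · exact h
        · rw [hwval] at h; exfalso; omega
        · rw [hwval] at h; exfalso; omega
      · ext v
        simp only [Set.mem_setOf_eq, Set.mem_insert_iff, Fin.ext_iff]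
        have hv := v.isLt
        omega
    · have hbn' : b = n := by omega
      by_cases ha : a = 0
      · have huniv : {v : Fin n | a ≤ (v : ℕ) ∧ (v : ℕ) < b} = Set.univ := by
          ext v
          have hv := v.isLt
          simp only [Set.mem_setOf_eq, Set.mem_univ, iff_true]
          omega
        rw [huniv]
      · -- force leftward: color vertex a - 1
        obtain ⟨a', rfl⟩ : ∃ a', a = a' + 1 := ⟨a - 1, by omega⟩
        have han : a' + 1 < n := by omega
        have ha'n : a' < n := by omega
        obtain ⟨x, y, hxy, hx, hy⟩ := crossing9 (fun v : Fin n => (v : ℕ) ≤ a')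
          (hconn ⟨a', ha'n⟩ ⟨a' + 1, han⟩) (by show a' ≤ a'; omega) (by show ¬ a' + 1 ≤ a'; omega)
        have hx' : (x : ℕ) ≤ a' := hx
        have hy' : ¬ (y : ℕ) ≤ a' := hy
        obtain ⟨e, he, hxe, hye⟩ := hxy
        obtain ⟨ℓ, him⟩ := hint e he
        have hxv := val_mem9 him hxe
        have hyv := val_mem9 him hye
        have hℓa : ℓ ≤ a' := by omega
        have had : a' + 1 < ℓ + d := by omega
        have hwe : (⟨a', ha'n⟩ : Fin n) ∈ e := mem_of_val9 him ha'n hℓa (by omega)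
        refine Relation.ReflTransGen.head
          ⟨e.erase ⟨a', ha'n⟩, ⟨a', ha'n⟩, ?_, Finset.notMem_erase _ _, ?_, ?_, ?_, ?_⟩
          (ih a' b (by omega) (by omega) (by omega))
        · rw [Finset.card_erase_of_mem hwe, edge_card9 him]
        · simp only [Set.mem_setOf_eq]
          omega
        · rwa [Finset.insert_erase hwe]
        · intro u hu hins
          have hn := neighbors9 hd hint him hwe hins
          simp only [Set.mem_setOf_eq, not_and, not_lt] at hu
          have hwval : ((⟨a', ha'n⟩ : Fin n) : ℕ) = a' := rfl
          rcases hn with h | h | h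
          · exact h
          · rw [hwval] at h; exfalso; omega
          · rw [hwval] at h; exfalso; omega
        · ext v
          simp only [Set.mem_setOf_eq, Set.mem_insert_iff, Fin.ext_iff]
          have hv := v.isLt
          omega

theorem stmt9 {n d : ℕ} (hd : 2 ≤ d) (H : Hypergraph' (Fin n))
    (hint : IsIntervalHG H d) (hconn : H.Connected)
    (hiso : ∀ v : Fin n, ¬ H.IsIsolated v)
    (j : ℕ) (hj : j + d ≤ n) :
    IsZFSet H d {v : Fin n | j ≤ (v : ℕ) ∧ (v : ℕ) < j + d} := by
  exact reach9 hd hint hconn n j (j + d) le_rfl hj (by omega)
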